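/- Kruskal's theorem for unlabelled trees (KT(ω)): the set T of finite rooted ordered unlabelled trees (equivalently, T(Q) for Q a one-element quasi-order), quasi-ordered by the embeddability relation ⪯, is a well quasi-order. -/

import Mathlib

/-- Finite rooted ordered trees (rose trees) with labels in `Q`. -/
inductive RoseTree (Q : Type) : Type
  | node : Q → List (RoseTree Q) → RoseTree Q

/-- The embeddability relation `⪯` on labelled trees. -/
inductive TreeEmb {Q : Type} (le : Q → Q → Prop) : RoseTree Q → RoseTree Q → Prop
  | subtree {t : RoseTree Q} {q : Q} {ss : List (RoseTree Q)} {s : RoseTree Q} :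
      s ∈ ss → TreeEmb le t s → TreeEmb le t (RoseTree.node q ss)
  | node {p q : Q} {ts ss : List (RoseTree Q)} :
      le p q → List.SublistForall₂ (TreeEmb le) ts ss →
      TreeEmb le (RoseTree.node p ts) (RoseTree.node q ss)

/-!
Nash-Williams' minimal bad sequence argument. If there were a bad sequence of trees, there would
be a minimal one `f`: each `f n` has least size among the `n`-th terms of bad sequences extending
`f 0, …, f (n-1)`. The immediate subtrees of the `f n` are then well quasi-ordered, since a bad
sequence of them could be spliced after a prefix of `f` to undercut its minimality. By Higman's
lemma the lists of immediate subtrees are well quasi-ordered under `SublistForall₂`, so together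
with the well quasi-ordered root labels two terms `f i`, `f j` with `i < j` embed root-to-root,
and `f` was not bad after all.
-/

open Set Set.PartiallyWellOrderedOn

section MinBadSeq

variable {α : Type*} {r : α → α → Prop} {rk : α → ℕ} {s : Set α} {f : ℕ → α}

theorem Set.PartiallyWellOrderedOn.of_isMinBadSeq [IsTrans α r] (hf : IsBadSeq r s f)
    (hmin : ∀ n, IsMinBadSeq r rk s n f) :
    {x ∈ s | ∃ n, r x (f n) ∧ rk x < rk (f n)}.PartiallyWellOrderedOn r := by
  rw [iff_forall_not_isBadSeq]
  rintro g ⟨hgs, hgbad⟩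
  choose idx hle hrk using fun k => (hgs k).2
  set k₀ := Function.argmin idx
  set N := idx k₀
  -- Splicing the tail of `g` from `k₀` on after `f 0, …, f (N-1)` undercuts `f N` in rank.
  let h : ℕ → α := fun m => if m < N then f m else g (k₀ + (m - N))
  refine hmin N h (fun m hm => (if_pos hm).symm) (by simpa [h] using hrk k₀) ⟨fun m => ?_, ?_⟩
  · by_cases hm : m < N
    · simpa [h, hm] using hf.1 m
    · simpa [h, hm] using (hgs _).1
  intro i j hij hr
  by_cases hj : j < N
  · simp only [h, hj, hij.trans hj, if_true] at hr
    exact hf.2 i j hij hr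
  by_cases hi : i < N
  · simp only [h, hi, hj, if_true, if_false] at hr
    have hN : N ≤ idx (k₀ + (j - N)) := Function.argmin_le idx _
    exact hf.2 i _ (hi.trans_le hN) (_root_.trans hr (hle _))
  · simp only [h, hi, hj, if_false] at hr
    exact hgbad _ _ (by omega) hr

end MinBadSeq

namespace List.SublistForall₂

variable {α : Type*} {R : α → α → Prop}

theorem exists_mem_of_mem {l₁ l₂ : List α} (h : SublistForall₂ R l₁ l₂) {a : α} (ha : a ∈ l₁) :
    ∃ b ∈ l₂, R a b := by
  induction h with
  | nil => cases ha
  | cons hab _ ih =>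
    rcases List.mem_cons.1 ha with rfl | ha
    · exact ⟨_, List.mem_cons_self, hab⟩
    · obtain ⟨b, hb, hab⟩ := ih ha
      exact ⟨b, List.mem_cons_of_mem _ hb, hab⟩
  | cons_right _ ih =>
    obtain ⟨b, hb, hab⟩ := ih ha
    exact ⟨b, List.mem_cons_of_mem _ hb, hab⟩

theorem trans_of_mem {l₁ l₂ l₃ : List α} (h₁₂ : SublistForall₂ R l₁ l₂)
    (h₂₃ : SublistForall₂ R l₂ l₃) (htrans : ∀ a b, ∀ c ∈ l₃, R a b → R b c → R a c) :
    SublistForall₂ R l₁ l₃ := by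
  induction h₂₃ generalizing l₁ with
  | nil => cases h₁₂; exact .nil
  | cons hbc _ ih =>
    cases h₁₂ with
    | nil => exact .nil
    | cons hab h₁₂ =>
      exact .cons (htrans _ _ _ List.mem_cons_self hab hbc)
        (ih h₁₂ fun a b c hc => htrans a b c (List.mem_cons_of_mem _ hc))
    | cons_right h₁₂ =>
      exact .cons_right (ih h₁₂ fun a b c hc => htrans a b c (List.mem_cons_of_mem _ hc))
  | cons_right _ ih =>
    exact .cons_right (ih h₁₂ fun a b c hc => htrans a b c (List.mem_cons_of_mem _ hc))

end List.SublistForall₂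

namespace RoseTree

variable {Q : Type}

def label : RoseTree Q → Q
  | node q _ => q

def children : RoseTree Q → List (RoseTree Q)
  | node _ ts => ts

theorem sizeOf_lt_of_mem_children {t s : RoseTree Q} (h : s ∈ t.children) :
    sizeOf s < sizeOf t := by
  cases t with
  | node q ts =>
    have := List.sizeOf_lt_of_mem (show s ∈ ts from h)
    simp only [node.sizeOf_spec]
    omega

end RoseTree

namespace TreeEmb

variable {Q : Type} {le : Q → Q → Prop}

theorem of_label_children {t s : RoseTree Q} (hl : le t.label s.label)
    (hc : List.SublistForall₂ (TreeEmb le) t.children s.children) : TreeEmb le t s := by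
  cases t; cases s; exact .node hl hc

theorem refl [Std.Refl le] : ∀ t : RoseTree Q, TreeEmb le t t
  | .node q ts =>
    .node (_root_.refl q) <| List.sublistForall₂_iff.2
      ⟨ts, List.forall₂_same.2 fun t _ => refl t, List.Sublist.refl ts⟩

theorem trans [IsTrans Q le] {a b c : RoseTree Q} (hab : TreeEmb le a b) (hbc : TreeEmb le b c) :
    TreeEmb le a c := by
  cases hbc with
  | subtree hs hbs => exact .subtree hs (hab.trans hbs)
  | node hpq hts =>
    cases hab with
    | subtree ht hat =>
      obtain ⟨s, hs, hts⟩ := hts.exists_mem_of_mem ht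
      exact .subtree hs (hat.trans hts)
    | node hop hrt =>
      exact .node (_root_.trans hop hpq)
        (hrt.trans_of_mem hts fun _ _ _ _ hab hbc => hab.trans hbc)
termination_by sizeOf c

theorem of_mem_children [Std.Refl le] {t s : RoseTree Q} (h : s ∈ t.children) : TreeEmb le s t := by
  cases t; exact .subtree h (refl s)

instance [IsPreorder Q le] : IsPreorder (RoseTree Q) (TreeEmb le) where
  refl := refl
  trans _ _ _ := trans

theorem wellQuasiOrdered [IsPreorder Q le] (h : WellQuasiOrdered le) :
    WellQuasiOrdered (TreeEmb le) := by
  rw [← partiallyWellOrderedOn_univ_iff, iff_not_exists_isMinBadSeq sizeOf]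
  rintro ⟨f, hf, hmin⟩
  have hchildren : {t | ∃ n, t ∈ (f n).children}.PartiallyWellOrderedOn (TreeEmb le) :=
    (PartiallyWellOrderedOn.of_isMinBadSeq hf hmin).mono fun t ⟨n, ht⟩ =>
      ⟨mem_univ t, n, of_mem_children ht, RoseTree.sizeOf_lt_of_mem_children ht⟩
  have hpairs := (partiallyWellOrderedOn_univ_iff.2 h).prod
    (partiallyWellOrderedOn_sublistForall₂ (TreeEmb le) hchildren)
  obtain ⟨i, j, hij, hlabel, hsub⟩ :=
    hpairs.exists_lt (f := fun n => ((f n).label, (f n).children)) fun n =>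
      ⟨mem_univ _, fun t ht => ⟨n, ht⟩⟩
  exact hf.2 i j hij (of_label_children hlabel hsub)

end TreeEmb

/-- Kruskal's theorem for unlabelled trees, KT(ω): unlabelled finite rooted
ordered trees (trees labelled by a one-element quasi-order) under
embeddability form a well quasi-order. -/
theorem kruskal_unlabelled :
    ∀ f : ℕ → RoseTree Unit,
      ∃ i j : ℕ, i < j ∧ TreeEmb (fun _ _ => True) (f i) (f j) :=
  have : IsPreorder Unit fun _ _ => True := { refl _ := trivial, trans _ _ _ _ _ := trivial }
  TreeEmb.wellQuasiOrdered fun _ => ⟨0, 1, zero_lt_one, trivial⟩
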